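/- Power of a point in hyperbolic geometry is well-defined: for a point A and a circle ω in the hyperbolic plane, the product d_E(A,B)·d_E(A,C) of pseudolengths, where BC is any chord of ω passing through A, does not depend on the choice of the chord. -/

import Mathlib

/-- The inverse hyperbolic cosine. -/
noncomputable def arcosh (x : ℝ) : ℝ := Real.log (x + Real.sqrt (x ^ 2 - 1))

/-- Hyperbolic distance between two points of the Poincaré disk (viewed inside `ℂ`). -/
noncomputable def dH (a b : ℂ) : ℝ :=
  arcosh (1 + 2 * ‖a - b‖ ^ 2 /
    ((1 - ‖a‖ ^ 2) * (1 - ‖b‖ ^ 2)))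

/-- Membership in the open unit (Poincaré) disk. -/
def inDisk (a : ℂ) : Prop := ‖a‖ < 1

/-- The (unsigned) hyperbolic angle at `y` of the triangle `x y z`,
defined via the hyperbolic law of cosines. -/
noncomputable def hAngle (x y z : ℂ) : ℝ :=
  Real.arccos ((Real.cosh (dH y x) * Real.cosh (dH y z) - Real.cosh (dH x z)) /
    (Real.sinh (dH y x) * Real.sinh (dH y z)))

/-- The hyperbolic area (angular defect) of triangle `a b c`. -/
noncomputable def hArea (a b c : ℂ) : ℝ :=
  Real.pi - hAngle b a c - hAngle a b c - hAngle a c b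

/-- `hSigma x y z = ∠xyz − ∠zxy − ∠yzx`: the angle of triangle `x y z` at `y`
minus its angles at `x` and at `z`. -/
noncomputable def hSigma (x y z : ℂ) : ℝ :=
  hAngle x y z - hAngle z x y - hAngle y z x

/-- `x` lies on the hyperbolic segment from `a` to `b`. -/
def onSeg (a x b : ℂ) : Prop := dH a x + dH x b = dH a b

/-- `x` lies strictly between `a` and `b`. -/
def sbtwH (a x b : ℂ) : Prop := onSeg a x b ∧ x ≠ a ∧ x ≠ b

/-- `x` lies on the hyperbolic line (geodesic) through `a` and `b`. -/
def onLine (a b x : ℂ) : Prop := onSeg a x b ∨ onSeg a b x ∨ onSeg x a b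

/-- Four points lie on a common hyperbolic circle. -/
def hConcyclic (a b c d : ℂ) : Prop :=
  ∃ o : ℂ, ∃ r : ℝ, inDisk o ∧ 0 < r ∧ dH o a = r ∧ dH o b = r ∧ dH o c = r ∧ dH o d = r

/-- `p` and `q` lie strictly on the same side of the line through `a`, `b`. -/
def hSameSide (a b p q : ℂ) : Prop :=
  ¬ onLine a b p ∧ ¬ onLine a b q ∧ ∀ x, onSeg p x q → ¬ onLine a b x

/-- `p` and `q` lie strictly on opposite sides of the line through `a`, `b`. -/
def hOppSide (a b p q : ℂ) : Prop :=
  ¬ onLine a b p ∧ ¬ onLine a b q ∧ ∃ x, onSeg p x q ∧ onLine a b x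

/-- The pseudolength of the segment `a b`: the Euclidean length of its image
after an isometry taking `a` to the center of the Poincaré disk. -/
noncomputable def dE (a b : ℂ) : ℝ := Real.tanh (dH a b / 2)

/-- The (signed) power of the point `a` with respect to the hyperbolic circle of
center `o` and radius `r`, in the pseudolength sense. -/
noncomputable def hPow (a o : ℂ) (r : ℝ) : ℝ :=
  Real.tanh ((dH a o - r) / 2) * Real.tanh ((dH a o + r) / 2)

/-- The hyperbolic circle of center `o`, radius `r` is tangent at `p` to the line `a b`. -/
def hTangentAt (o : ℂ) (r : ℝ) (a b p : ℂ) : Prop :=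
  onLine a b p ∧ dH o p = r ∧ ∀ q, onLine a b q → r ≤ dH o q

/-- Two hyperbolic circles are tangent: they meet in exactly one point. -/
def hTangentCircles (o : ℂ) (r : ℝ) (o' : ℂ) (r' : ℝ) : Prop :=
  ∃! p : ℂ, dH o p = r ∧ dH o' p = r'

/-!
Move `A` to the centre by the disk automorphism `z ↦ (z - A) / (1 - Ā z)`. It preserves `dH`, so
`d_E(A, z)` becomes the Euclidean norm of the image of `z`, the chord through `A` becomes a chord
through `0`, and the hyperbolic circle of radius `r` about `o` becomes the Euclidean circle
`‖z - o'‖ = t ‖1 - ō' z‖` with `t = tanh (r / 2)`. The Euclidean power of `0` with respect to that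
circle gives `d_E(A,B) · d_E(A,C) = |tanh ((d - r) / 2) · tanh ((d + r) / 2)|` with `d = d_H(A, o)`,
which does not depend on the chord.
-/

open ComplexConjugate

namespace Real

theorem tanh_nonneg {x : ℝ} (hx : 0 ≤ x) : 0 ≤ tanh x := by
  rw [tanh_eq_sinh_div_cosh]
  exact div_nonneg (sinh_nonneg_iff.2 hx) (cosh_pos x).le

theorem tanh_half_sq (x : ℝ) : tanh (x / 2) ^ 2 = (cosh x - 1) / (cosh x + 1) := by
  obtain ⟨y, rfl⟩ : ∃ y, x = 2 * y := ⟨x / 2, by ring⟩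
  have hc := cosh_pos y
  rw [mul_div_cancel_left₀ _ two_ne_zero, cosh_two_mul, tanh_eq_sinh_div_cosh]
  field_simp
  rw [cosh_sq]
  ring

theorem tanh_add (x y : ℝ) : tanh (x + y) = (tanh x + tanh y) / (1 + tanh x * tanh y) := by
  have hx := cosh_pos x
  have hy := cosh_pos y
  have hxy : 0 < cosh x * cosh y + sinh x * sinh y := cosh_add x y ▸ cosh_pos _
  simp only [tanh_eq_sinh_div_cosh, sinh_add, cosh_add]
  field_simp

theorem tanh_sub_mul_tanh_add (x y : ℝ) :
    tanh (x - y) * tanh (x + y) = (tanh x ^ 2 - tanh y ^ 2) / (1 - tanh x ^ 2 * tanh y ^ 2) := by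
  rw [sub_eq_add_neg, tanh_add, tanh_add, tanh_neg, div_mul_div_comm]
  congr 1 <;> ring

end Real

theorem dH_comm (a b : ℂ) : dH a b = dH b a := by
  rw [dH, dH, norm_sub_rev, mul_comm (1 - ‖a‖ ^ 2)]

theorem norm_one_sub_conj_mul_sq (a b : ℂ) :
    ‖1 - conj a * b‖ ^ 2 = (1 - ‖a‖ ^ 2) * (1 - ‖b‖ ^ 2) + ‖a - b‖ ^ 2 := by
  simp only [Complex.sq_norm, Complex.normSq_apply, Complex.sub_re, Complex.sub_im, Complex.one_re,
    Complex.one_im, Complex.mul_re, Complex.mul_im, Complex.conj_re, Complex.conj_im]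
  ring

theorem one_sub_norm_sq_pos {a : ℂ} (ha : inDisk a) : 0 < 1 - ‖a‖ ^ 2 := by
  have : ‖a‖ ^ 2 < 1 := pow_lt_one₀ (norm_nonneg a) ha two_ne_zero
  linarith

theorem one_sub_conj_mul_ne_zero {a b : ℂ} (ha : inDisk a) (hb : inDisk b) :
    1 - conj a * b ≠ 0 := by
  intro h
  have key := norm_one_sub_conj_mul_sq a b
  rw [h, norm_zero] at key
  nlinarith [mul_pos (one_sub_norm_sq_pos ha) (one_sub_norm_sq_pos hb), sq_nonneg ‖a - b‖]

theorem dE_eq_norm_div {a b : ℂ} (ha : inDisk a) (hb : inDisk b) :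
    dE a b = ‖a - b‖ / ‖1 - conj a * b‖ := by
  set D := (1 - ‖a‖ ^ 2) * (1 - ‖b‖ ^ 2)
  have hD : 0 < D := mul_pos (one_sub_norm_sq_pos ha) (one_sub_norm_sq_pos hb)
  have hX : 1 ≤ 1 + 2 * ‖a - b‖ ^ 2 / D := le_add_of_nonneg_right (by positivity)
  have hcosh : Real.cosh (dH a b) = 1 + 2 * ‖a - b‖ ^ 2 / D := Real.cosh_arcosh hX
  have hdH : 0 ≤ dH a b := Real.arcosh_nonneg hX
  rw [dE, ← sq_eq_sq₀ (Real.tanh_nonneg (by positivity)) (by positivity), Real.tanh_half_sq,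
    hcosh, div_pow, show ‖1 - conj a * b‖ ^ 2 = D + ‖a - b‖ ^ 2 from norm_one_sub_conj_mul_sq a b]
  have : 0 < D + ‖a - b‖ ^ 2 := by positivity
  field_simp
  ring

noncomputable def diskMobius (A z : ℂ) : ℂ := (z - A) / (1 - conj A * z)

section Mobius

variable {A x y z : ℂ}

theorem diskMobius_self (A : ℂ) : diskMobius A A = 0 := by simp [diskMobius]

theorem one_sub_norm_diskMobius_sq (hA : inDisk A) (hz : inDisk z) :
    1 - ‖diskMobius A z‖ ^ 2 = (1 - ‖A‖ ^ 2) * (1 - ‖z‖ ^ 2) / ‖1 - conj A * z‖ ^ 2 := by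
  have hq : 0 < ‖1 - conj A * z‖ ^ 2 := by
    have := one_sub_conj_mul_ne_zero hA hz
    positivity
  rw [diskMobius, norm_div, div_pow, norm_sub_rev z A, eq_div_iff hq.ne', sub_mul,
    div_mul_cancel₀ _ hq.ne', norm_one_sub_conj_mul_sq]
  ring

theorem diskMobius_inDisk (hA : inDisk A) (hz : inDisk z) : inDisk (diskMobius A z) := by
  have hq := one_sub_conj_mul_ne_zero hA hz
  have : 0 < 1 - ‖diskMobius A z‖ ^ 2 := by
    rw [one_sub_norm_diskMobius_sq hA hz]
    exact div_pos (mul_pos (one_sub_norm_sq_pos hA) (one_sub_norm_sq_pos hz)) (by positivity)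
  exact (sq_lt_one_iff₀ (norm_nonneg _)).1 (by linarith)

theorem diskMobius_sub (hA : inDisk A) (hz : inDisk z) (hy : inDisk y) :
    diskMobius A z - diskMobius A y
      = (z - y) * (1 - conj A * A) / ((1 - conj A * z) * (1 - conj A * y)) := by
  rw [diskMobius, diskMobius,
    div_sub_div _ _ (one_sub_conj_mul_ne_zero hA hz) (one_sub_conj_mul_ne_zero hA hy)]
  ring

theorem eq_of_diskMobius_eq (hA : inDisk A) (hz : inDisk z) (hy : inDisk y)
    (h : diskMobius A z = diskMobius A y) : z = y := by
  rw [← sub_eq_zero, diskMobius_sub hA hz hy] at h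
  simpa [sub_eq_zero, one_sub_conj_mul_ne_zero hA hA, one_sub_conj_mul_ne_zero hA hz,
    one_sub_conj_mul_ne_zero hA hy] using h

theorem dH_diskMobius (hA : inDisk A) (hz : inDisk z) (hy : inDisk y) :
    dH (diskMobius A z) (diskMobius A y) = dH z y := by
  have hAA : ‖1 - conj A * A‖ = 1 - ‖A‖ ^ 2 := by
    rw [Complex.conj_mul', ← Complex.ofReal_pow, ← Complex.ofReal_one, ← Complex.ofReal_sub,
      Complex.norm_real, Real.norm_of_nonneg (one_sub_norm_sq_pos hA).le]
  have hqz := norm_ne_zero_iff.2 (one_sub_conj_mul_ne_zero hA hz)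
  have hqy := norm_ne_zero_iff.2 (one_sub_conj_mul_ne_zero hA hy)
  have := one_sub_norm_sq_pos hA
  have := one_sub_norm_sq_pos hz
  have := one_sub_norm_sq_pos hy
  rw [dH, dH, diskMobius_sub hA hz hy, one_sub_norm_diskMobius_sq hA hz,
    one_sub_norm_diskMobius_sq hA hy, norm_div, norm_mul, norm_mul, hAA]
  generalize ‖1 - conj A * z‖ = qz at *
  generalize ‖1 - conj A * y‖ = qy at *
  field_simp

theorem dE_eq_norm_diskMobius (hA : inDisk A) (hz : inDisk z) : dE A z = ‖diskMobius A z‖ := by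
  rw [dE_eq_norm_div hA hz, diskMobius, norm_div, norm_sub_rev]

theorem onLine_diskMobius_iff (hA : inDisk A) (hx : inDisk x) (hy : inDisk y) (hz : inDisk z) :
    onLine (diskMobius A x) (diskMobius A y) (diskMobius A z) ↔ onLine x y z := by
  simp only [onLine, onSeg, dH_diskMobius hA hx hy, dH_diskMobius hA hy hz, dH_diskMobius hA hx hz,
    dH_diskMobius hA hz hx, dH_diskMobius hA hz hy]

end Mobius

theorem norm_sub_sq_eq (b c : ℂ) : ‖b - c‖ ^ 2 = ‖b‖ ^ 2 + ‖c‖ ^ 2 - 2 * (conj b * c).re := by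
  simp only [Complex.sq_norm, Complex.normSq_apply, Complex.sub_re, Complex.sub_im,
    Complex.mul_re, Complex.conj_re, Complex.conj_im]
  ring

theorem norm_one_sub_conj_mul_sq_eq (b c : ℂ) :
    ‖1 - conj b * c‖ ^ 2 = 1 - 2 * (conj b * c).re + ‖b‖ ^ 2 * ‖c‖ ^ 2 := by
  simp only [Complex.sq_norm, Complex.normSq_apply, Complex.sub_re, Complex.sub_im, Complex.one_re,
    Complex.one_im, Complex.mul_re, Complex.mul_im, Complex.conj_re, Complex.conj_im]
  ring

theorem onSeg.symm {a x b : ℂ} (h : onSeg a x b) : onSeg b x a := by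
  unfold onSeg at *
  rw [dH_comm b x, dH_comm x a, dH_comm b a]
  linarith

theorem dE_of_onSeg {a x b : ℂ} (h : onSeg a x b) :
    dE a b = (dE a x + dE x b) / (1 + dE a x * dE x b) := by
  rw [dE, dE, dE, ← h, add_div, Real.tanh_add]

theorem inDisk_zero : inDisk 0 := by simp [inDisk]

theorem dE_zero_left {b : ℂ} (hb : inDisk b) : dE 0 b = ‖b‖ := by
  simp [dE_eq_norm_div inDisk_zero hb]

theorem dE_zero_right {b : ℂ} (hb : inDisk b) : dE b 0 = ‖b‖ := by
  simp [dE_eq_norm_div hb inDisk_zero]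

section lineThroughOrigin

variable {b c : ℂ}

theorem re_conj_mul_of_onSeg_zero_left (hb : inDisk b) (hc : inDisk c) (h : onSeg 0 b c) :
    (conj b * c).re = ‖b‖ * ‖c‖ := by
  have e := dE_of_onSeg h
  rw [dE_zero_left hb, dE_zero_left hc, dE_eq_norm_div hb hc] at e
  have hq : 0 < ‖1 - conj b * c‖ := norm_pos_iff.2 (one_sub_conj_mul_ne_zero hb hc)
  have hD := mul_pos (one_sub_norm_sq_pos hb) (one_sub_norm_sq_pos hc)
  have hp2 := norm_sub_sq_eq b c
  have hq2 := norm_one_sub_conj_mul_sq_eq b c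
  set p := ‖b - c‖
  set q := ‖1 - conj b * c‖
  have hden : 0 < 1 + ‖b‖ * (p / q) := by positivity
  rw [eq_div_iff hden.ne'] at e
  field_simp at e
  have e2 : ((‖c‖ - ‖b‖) * q) ^ 2 = ((1 - ‖b‖ * ‖c‖) * p) ^ 2 := by
    congr 1; linear_combination e
  have : ((conj b * c).re - ‖b‖ * ‖c‖) * ((1 - ‖b‖ ^ 2) * (1 - ‖c‖ ^ 2)) = 0 := by
    linear_combination (1 / 2 : ℝ) * e2 + ((1 - ‖b‖ * ‖c‖) ^ 2 / 2) * hp2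
      - ((‖c‖ - ‖b‖) ^ 2 / 2) * hq2
  linarith [(mul_eq_zero.1 this).resolve_right hD.ne']

theorem re_conj_mul_of_onSeg_zero_mid (hb : inDisk b) (hc : inDisk c) (h : onSeg b 0 c) :
    (conj b * c).re = -(‖b‖ * ‖c‖) := by
  have e := dE_of_onSeg h
  rw [dE_zero_right hb, dE_zero_left hc, dE_eq_norm_div hb hc] at e
  have hq : 0 < ‖1 - conj b * c‖ := norm_pos_iff.2 (one_sub_conj_mul_ne_zero hb hc)
  have hD := mul_pos (one_sub_norm_sq_pos hb) (one_sub_norm_sq_pos hc)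
  have hp2 := norm_sub_sq_eq b c
  have hq2 := norm_one_sub_conj_mul_sq_eq b c
  set p := ‖b - c‖
  set q := ‖1 - conj b * c‖
  have hden : 0 < 1 + ‖b‖ * ‖c‖ := by positivity
  rw [div_eq_div_iff hq.ne' hden.ne'] at e
  have e2 : ((1 + ‖b‖ * ‖c‖) * p) ^ 2 = ((‖b‖ + ‖c‖) * q) ^ 2 := by
    congr 1; linear_combination e
  have : ((conj b * c).re + ‖b‖ * ‖c‖) * ((1 - ‖b‖ ^ 2) * (1 - ‖c‖ ^ 2)) = 0 := by
    linear_combination (-1 / 2 : ℝ) * e2 + ((1 + ‖b‖ * ‖c‖) ^ 2 / 2) * hp2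
      - ((‖b‖ + ‖c‖) ^ 2 / 2) * hq2
  linarith [(mul_eq_zero.1 this).resolve_right hD.ne']

theorem conj_mul_im_eq_zero_of_onLine_zero (hb : inDisk b) (hc : inDisk c) (h : onLine b c 0) :
    (conj b * c).im = 0 := by
  have hre : (conj b * c).re ^ 2 = (‖b‖ * ‖c‖) ^ 2 := by
    rcases h with h | h | h
    · rw [re_conj_mul_of_onSeg_zero_mid hb hc h, neg_sq]
    · rw [← Complex.conj_re, map_mul, Complex.conj_conj, mul_comm,
        re_conj_mul_of_onSeg_zero_left hc hb h.symm, mul_comm]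
    · rw [re_conj_mul_of_onSeg_zero_left hb hc h]
  have hnorm : (conj b * c).re ^ 2 + (conj b * c).im ^ 2 = (‖b‖ * ‖c‖) ^ 2 := by
    rw [← Complex.norm_conj b, ← norm_mul, Complex.sq_norm, Complex.normSq_apply]
    ring
  exact pow_eq_zero_iff two_ne_zero |>.1 (by linarith)

end lineThroughOrigin

theorem exists_ofReal_mul_of_conj_mul_im_eq_zero {b c : ℂ} (hb : b ≠ 0)
    (h : (conj b * c).im = 0) : ∃ l : ℝ, c = l * b := by
  refine ⟨(conj b * c).re / ‖b‖ ^ 2, ?_⟩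
  have hR : (((conj b * c).re : ℝ) : ℂ) = conj b * c := Complex.ext rfl (by simp [h])
  have hb2 : ((‖b‖ : ℂ) ^ 2) ≠ 0 := by simpa using hb
  rw [Complex.ofReal_div, hR, Complex.ofReal_pow, div_mul_eq_mul_div, eq_div_iff hb2,
    ← Complex.mul_conj']
  ring

/-- Euclidean power of the origin with respect to the circle `a‖z‖² - 2 Re(w̄ z) + k = 0`. -/
theorem norm_mul_norm_mul_abs_eq_abs_of_circle {a k : ℝ} {w b c : ℂ}
    (hb : a * ‖b‖ ^ 2 - 2 * (conj w * b).re + k = 0)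
    (hc : a * ‖c‖ ^ 2 - 2 * (conj w * c).re + k = 0)
    (hbc : b ≠ c) (hcol : (conj b * c).im = 0) :
    ‖b‖ * ‖c‖ * |a| = |k| := by
  rcases eq_or_ne b 0 with rfl | hb0
  · simp_all
  obtain ⟨l, rfl⟩ := exists_ofReal_mul_of_conj_mul_im_eq_zero hb0 hcol
  have hl : 1 - l ≠ 0 := by
    rintro hl
    obtain rfl : l = 1 := by linarith
    simp at hbc
  have hc' : a * ‖b‖ ^ 2 * l ^ 2 - 2 * (conj w * b).re * l + k = 0 := by
    rw [← hc, norm_mul, Complex.norm_real, Real.norm_eq_abs, mul_pow, sq_abs,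
      mul_left_comm (conj w), Complex.re_ofReal_mul]
    ring
  -- `1` and `l` are the two roots of `a‖b‖² X² - 2 Re(w̄ b) X + k`
  have hroots : (1 - l) * (a * ‖b‖ ^ 2 * (1 + l) - 2 * (conj w * b).re) = 0 := by
    linear_combination hb - hc'
  have hk : k = a * ‖b‖ ^ 2 * l := by
    linear_combination hb - (mul_eq_zero.1 hroots).resolve_left hl
  rw [hk, norm_mul, Complex.norm_real, Real.norm_eq_abs, abs_mul, abs_mul, abs_sq]
  ring

theorem circle_eq_of_dE_eq {o z : ℂ} {t : ℝ} (ho : inDisk o) (hz : inDisk z) (h : dE o z = t) :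
    (1 - t ^ 2 * ‖o‖ ^ 2) * ‖z‖ ^ 2 - 2 * (conj (((1 - t ^ 2 : ℝ) : ℂ) * o) * z).re
      + (‖o‖ ^ 2 - t ^ 2) = 0 := by
  rw [dE_eq_norm_div ho hz, div_eq_iff (norm_ne_zero_iff.2 (one_sub_conj_mul_ne_zero ho hz))] at h
  have h2 : ‖o - z‖ ^ 2 = t ^ 2 * ‖1 - conj o * z‖ ^ 2 := by rw [h]; ring
  rw [norm_sub_sq_eq, norm_one_sub_conj_mul_sq_eq] at h2
  rw [map_mul, Complex.conj_ofReal, mul_assoc, Complex.re_ofReal_mul]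
  linear_combination h2

theorem hPow_eq (a o : ℂ) (r : ℝ) :
    hPow a o r = (dE a o ^ 2 - Real.tanh (r / 2) ^ 2) / (1 - dE a o ^ 2 * Real.tanh (r / 2) ^ 2) := by
  rw [hPow, sub_div, add_div, Real.tanh_sub_mul_tanh_add, dE]

theorem dE_mul_dE_eq_abs_hPow {A o B C : ℂ} {r : ℝ} (hA : inDisk A) (ho : inDisk o)
    (hB : inDisk B) (hC : inDisk C) (hBo : dH o B = r) (hCo : dH o C = r) (hBC : B ≠ C)
    (hABC : onLine B C A) :
    dE A B * dE A C = |hPow A o r| := by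
  have ho' := diskMobius_inDisk hA ho
  have hcircle {z : ℂ} (hz : inDisk z) (hzo : dH o z = r) :=
    circle_eq_of_dE_eq ho' (diskMobius_inDisk hA hz)
      (by rw [dE, dH_diskMobius hA ho hz, hzo])
  have hline : onLine (diskMobius A B) (diskMobius A C) 0 := by
    rwa [← diskMobius_self A, onLine_diskMobius_iff hA hB hC hA]
  have key := norm_mul_norm_mul_abs_eq_abs_of_circle (hcircle hB hBo) (hcircle hC hCo)
    (fun h => hBC (eq_of_diskMobius_eq hA hB hC h))
    (conj_mul_im_eq_zero_of_onLine_zero (diskMobius_inDisk hA hB) (diskMobius_inDisk hA hC) hline)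
  have hden : 0 < 1 - ‖diskMobius A o‖ ^ 2 * Real.tanh (r / 2) ^ 2 := by
    have := one_sub_norm_sq_pos ho'
    nlinarith [Real.tanh_sq_lt_one (r / 2), sq_nonneg ‖diskMobius A o‖]
  rw [hPow_eq, dE_eq_norm_diskMobius hA ho, dE_eq_norm_diskMobius hA hB,
    dE_eq_norm_diskMobius hA hC, abs_div, abs_of_pos hden, eq_div_iff hden.ne', ← key,
    abs_of_pos (by linarith)]
  ring

theorem power_of_point_well_defined_general (A o B C B' C' : ℂ) (r : ℝ)
    (hA : inDisk A) (ho : inDisk o)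
    (hB : inDisk B) (hC : inDisk C) (hB' : inDisk B') (hC' : inDisk C')
    (hBc : dH o B = r) (hCc : dH o C = r) (hB'c : dH o B' = r) (hC'c : dH o C' = r)
    (hBC : B ≠ C) (hB'C' : B' ≠ C')
    (h1 : onLine B C A) (h2 : onLine B' C' A) :
    dE A B * dE A C = dE A B' * dE A C' := by
  rw [dE_mul_dE_eq_abs_hPow hA ho hB hC hBc hCc hBC h1,
    dE_mul_dE_eq_abs_hPow hA ho hB' hC' hB'c hC'c hB'C' h2]

/-- The power of a point in hyperbolic geometry is well defined: if `BC` and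
`B'C'` are two chords of the circle of center `o`, radius `r`, both passing
through the point `A`, then `d_E(A,B)·d_E(A,C) = d_E(A,B')·d_E(A,C')`. -/
theorem power_of_point_well_defined (A o B C B' C' : ℂ) (r : ℝ)
    (hA : inDisk A) (ho : inDisk o)
    (hB : inDisk B) (hC : inDisk C) (hB' : inDisk B') (hC' : inDisk C')
    (hr : 0 < r)
    (hBc : dH o B = r) (hCc : dH o C = r) (hB'c : dH o B' = r) (hC'c : dH o C' = r)
    (hBC : B ≠ C) (hB'C' : B' ≠ C')
    (h1 : onLine B C A) (h2 : onLine B' C' A) :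
    dE A B * dE A C = dE A B' * dE A C' :=
  power_of_point_well_defined_general A o B C B' C' r hA ho hB hC hB' hC' hBc hCc hB'c hC'c hBC
    hB'C' h1 h2
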